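/- Let G : P × I → {0,1} with finite nonempty P, I, and let v be the value of the associated zero-sum game. For any ε > 0 and k > ln|P|/(2ε²), there exists a multiset of k inputs such that for every program i ∈ P, the fraction of inputs j in the multiset with G(i,j) = 1 is greater than v − ε. -/

import Mathlib

/-!
Take a mixed strategy `q` on inputs that is optimal up to a small slack, and draw `k` inputs
independently from `q`. For each program `i` the payoffs `G i (T m)` are independent and lie in
`[0, 1]` with mean at least `v - slack`, so by Hoeffding's inequality the empirical mean falls
below `v - ε` with probability at most `exp (-2 k t²)`. The bound on `k` makes the union bound
over the `|P|` programs smaller than `1`, so some sample is good for every program at once.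
-/

open Finset MeasureTheory ProbabilityTheory

theorem measureReal_pi_sum_le_mul_integral_sub_le {Ω : Type*} [MeasurableSpace Ω] (μ : Measure Ω)
    [IsProbabilityMeasure μ] {f : Ω → ℝ} (hf_meas : Measurable f) (hf : ∀ x, f x ∈ Set.Icc 0 1)
    (k : ℕ) {t : ℝ} (ht : 0 ≤ t) :
    (Measure.pi fun _ : Fin k ↦ μ).real {T | ∑ m, f (T m) ≤ k * (∫ x, f x ∂μ - t)} ≤
      Real.exp (-2 * k * t ^ 2) := by
  set c := ∫ x, f x ∂μ with hc
  clear_value c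
  have h_sets : {T : Fin k → Ω | ∑ m, f (T m) ≤ k * (c - t)} =
      {T | k * t ≤ ∑ m, (c - f (T m))} := by
    ext T
    simp only [Set.mem_ofPred_eq, sum_sub_distrib, sum_const, card_univ, Fintype.card_fin,
      nsmul_eq_mul]
    constructor <;> intro h <;> linarith
  have h_subG : ∀ m : Fin k, HasSubgaussianMGF (fun T : Fin k → Ω ↦ c - f (T m))
      ((‖c - (c - 1)‖₊ / 2) ^ 2) (Measure.pi fun _ ↦ μ) := by
    intro m
    have h_meas : Measurable fun T : Fin k → Ω ↦ c - f (T m) := by fun_prop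
    refine hasSubgaussianMGF_of_mem_Icc_of_integral_eq_zero h_meas.aemeasurable
      (ae_of_all _ fun T ↦ ?_) ?_
    · obtain ⟨h0, h1⟩ := hf (T m)
      exact ⟨by linarith, by linarith⟩
    · rw [integral_comp_eval (μ := fun _ ↦ μ) (i := m) (f := fun x ↦ c - f x) (by fun_prop),
        integral_sub (integrable_const c)
          (Integrable.of_mem_Icc 0 1 hf_meas.aemeasurable (ae_of_all _ hf))]
      simp [hc]
  have h_indep : iIndepFun (fun (m : Fin k) (T : Fin k → Ω) ↦ c - f (T m)) (Measure.pi fun _ ↦ μ) :=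
    iIndepFun_pi (X := fun _ x ↦ c - f x) fun _ ↦ by fun_prop
  rw [h_sets]
  refine (HasSubgaussianMGF.measure_sum_ge_le_of_iIndepFun h_indep (s := univ)
    (fun m _ ↦ h_subG m) (mul_nonneg k.cast_nonneg ht)).trans_eq ?_
  congr 1
  simp only [sub_sub_cancel, nnnorm_one, one_div, inv_pow, sum_const, card_univ,
    Fintype.card_fin, nsmul_eq_mul, NNReal.coe_mul, NNReal.coe_natCast, NNReal.coe_inv,
    NNReal.coe_pow, NNReal.coe_ofNat, neg_mul]
  field_simp

theorem exists_forall_mul_integral_sub_lt_sum {Ω P : Type*} [MeasurableSpace Ω] [Fintype P]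
    (μ : Measure Ω) [IsProbabilityMeasure μ] {f : P → Ω → ℝ} (hf_meas : ∀ i, Measurable (f i))
    (hf : ∀ i x, f i x ∈ Set.Icc 0 1) {k : ℕ} {t : ℝ} (ht : 0 ≤ t)
    (h_card : Fintype.card P * Real.exp (-2 * k * t ^ 2) < 1) :
    ∃ T : Fin k → Ω, ∀ i, k * (∫ x, f i x ∂μ - t) < ∑ m, f i (T m) := by
  set ν := Measure.pi fun _ : Fin k ↦ μ
  set bad : P → Set (Fin k → Ω) := fun i ↦ {T | ∑ m, f i (T m) ≤ k * (∫ x, f i x ∂μ - t)}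
  by_contra! h_all_bad
  have h_cover : Set.univ = ⋃ i, bad i :=
    (Set.eq_univ_of_forall fun T ↦ Set.mem_iUnion.2 (h_all_bad T)).symm
  have : ν.real Set.univ ≤ Fintype.card P * Real.exp (-2 * k * t ^ 2) :=
    calc ν.real Set.univ ≤ ∑ i, ν.real (bad i) := h_cover ▸ measureReal_iUnion_fintype_le bad
      _ ≤ ∑ _i : P, Real.exp (-2 * k * t ^ 2) := sum_le_sum fun i _ ↦
          measureReal_pi_sum_le_mul_integral_sub_le μ (hf_meas i) (hf i) k ht
      _ = Fintype.card P * Real.exp (-2 * k * t ^ 2) := by simp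
  simp only [probReal_univ] at this
  linarith

noncomputable def PMF.ofStdSimplex {ι : Type*} [Fintype ι] (q : stdSimplex ℝ ι) : PMF ι :=
  PMF.ofFintype (fun j ↦ ENNReal.ofReal (q.1 j)) <| by
    rw [← ENNReal.ofReal_sum_of_nonneg fun j _ ↦ q.2.1 j, q.2.2, ENNReal.ofReal_one]

theorem PMF.integral_ofStdSimplex {ι : Type*} [Fintype ι] [MeasurableSpace ι]
    [MeasurableSingletonClass ι] (q : stdSimplex ℝ ι) (f : ι → ℝ) :
    ∫ j, f j ∂(PMF.ofStdSimplex q).toMeasure = ∑ j, q.1 j * f j := by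
  simp [PMF.integral_eq_sum, PMF.ofStdSimplex, ENNReal.toReal_ofReal (q.2.1 _)]

theorem yao_uniform_distributional_general {P I : Type*} [Fintype P] [Fintype I]
    [Nonempty I]
    (G : P → I → ℝ) (hG : ∀ i j, G i j = 0 ∨ G i j = 1)
    (ε : ℝ) (hε : 0 < ε) (k : ℕ)
    (hkP : Real.log (Fintype.card P) / (2 * ε ^ 2) < k) :
    ∃ T : Fin k → I, ∀ i : P,
      (⨆ q : stdSimplex ℝ I, ⨅ i' : P, ∑ j, q.1 j * G i' j) - ε <
        (1 / k : ℝ) * ∑ m, G i (T m) := by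
  let _ : MeasurableSpace I := ⊤
  set v := ⨆ q : stdSimplex ℝ I, ⨅ i' : P, ∑ j, q.1 j * G i' j
  have hk : (0 : ℝ) < k :=
    lt_of_le_of_lt (div_nonneg (Real.log_natCast_nonneg _) (by positivity)) hkP
  have h_log : Real.log (Fintype.card P) / (2 * k) < ε ^ 2 := by
    rw [div_lt_iff₀ (by positivity)] at hkP ⊢
    linarith
  -- shrink `ε` to `t` so that the slack `ε - t` absorbs a near-optimal mixed strategy
  obtain ⟨t, ht_gt, ht_lt⟩ := exists_between ((Real.sqrt_lt' hε).2 h_log)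
  have ht : 0 < t := (Real.sqrt_nonneg _).trans_lt ht_gt
  obtain ⟨q, hq⟩ : ∃ q : stdSimplex ℝ I, v - (ε - t) < ⨅ i', ∑ j, q.1 j * G i' j :=
    exists_lt_of_lt_ciSup (by linarith)
  have h_card : Fintype.card P * Real.exp (-2 * k * t ^ 2) < 1 := by
    have := (Real.sqrt_lt' ht).1 ht_gt
    rw [div_lt_iff₀ (by positivity)] at this
    calc _ ≤ Real.exp (Real.log (Fintype.card P)) * Real.exp (-2 * k * t ^ 2) := by
          gcongr; exact Real.le_exp_log _
      _ < 1 := by rw [← Real.exp_add, Real.exp_lt_one_iff]; linarith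
  obtain ⟨T, hT⟩ := exists_forall_mul_integral_sub_lt_sum (PMF.ofStdSimplex q).toMeasure
    (f := G) (fun i ↦ measurable_of_countable _)
    (fun i j ↦ by rcases hG i j with h | h <;> simp [h]) ht.le h_card
  refine ⟨T, fun i ↦ ?_⟩
  have h_opt : v - (ε - t) < ∑ j, q.1 j * G i j :=
    hq.trans_le (ciInf_le (Set.finite_range _).bddBelow i)
  have h_sample := hT i
  rw [PMF.integral_ofStdSimplex] at h_sample
  rw [one_div, ← div_eq_inv_mul, lt_div_iff₀ hk]
  calc (v - ε) * k < (∑ j, q.1 j * G i j - t) * k :=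
      mul_lt_mul_of_pos_right (by linarith) hk
    _ < ∑ m, G i (T m) := by linarith

theorem yao_uniform_distributional {P I : Type*} [Fintype P] [Fintype I]
    [Nonempty P] [Nonempty I]
    (G : P → I → ℝ) (hG : ∀ i j, G i j = 0 ∨ G i j = 1)
    (ε : ℝ) (hε : 0 < ε) (k : ℕ) (hk : 0 < k)
    (hkP : Real.log (Fintype.card P) / (2 * ε ^ 2) < k) :
    ∃ T : Fin k → I, ∀ i : P,
      (⨆ q : stdSimplex ℝ I, ⨅ i' : P, ∑ j, q.1 j * G i' j) - ε <
        (1 / k : ℝ) * ∑ m, G i (T m) :=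
  yao_uniform_distributional_general G hG ε hε k hkP
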